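/- arXiv:2510.23757 — 10 statements merged into one kernel-verified Lean document; each statement's English description precedes it below -/
import Mathlib

section
/- Let r ≥ 1, let g₀ ∈ ℂ, let g : Fin r → ℂ satisfy gⱼ ≠ g₀ for all j, and let q : Fin r → ℂ. Then the two conditions ∑ⱼ qⱼ = 0 and ∑ⱼ qⱼ/(gⱼ − g₀) = 0 hold simultaneously if and only if the single vector equation ∑ⱼ (qⱼ/(gⱼ − g₀)) • (1 − g₀gⱼ, √(−1)·(1 + g₀gⱼ), g₀ + gⱼ) = 0 holds in ℂ³. -/
/-!
Write `cⱼ = qⱼ / (gⱼ - g₀)`, so that `qⱼ = cⱼ gⱼ - g₀ cⱼ`. With `C = ∑ cⱼ` and `G = ∑ cⱼ gⱼ`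
the three components of the 1-form sum are `C - g₀ G`, `i (C + g₀ G)` and `g₀ C + G`, while
`∑ qⱼ = G - g₀ C`. The first two components vanish iff `C = 0 = g₀ G`, and then the third one
vanishes iff `G = 0`; so both sides say `C = G = 0`.
-/

open Finset

theorem sum_smul_vecCons_eq {ι R : Type*} [Fintype ι] [CommRing R] (a i : R) (c g : ι → R) :
    ∑ j, c j • (![1 - a * g j, i * (1 + a * g j), a + g j] : Fin 3 → R) =
      ![∑ j, c j - a * ∑ j, c j * g j, i * (∑ j, c j + a * ∑ j, c j * g j),
        a * ∑ j, c j + ∑ j, c j * g j] := by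
  ext k
  simp only [Finset.sum_apply, Pi.smul_apply, smul_eq_mul]
  fin_cases k <;>
    simp only [Fin.zero_eta, Fin.mk_one, Fin.reduceFinMk, Matrix.cons_val, mul_sum,
      ← sum_sub_distrib, ← sum_add_distrib] <;>
    exact sum_congr rfl fun j _ => by ring

theorem vecCons_eq_zero_iff {R : Type*} [CommRing R] [NoZeroDivisors R] {a i : R}
    (h2 : (2 : R) ≠ 0) (hi : i ≠ 0) (C G : R) :
    (![C - a * G, i * (C + a * G), a * C + G] : Fin 3 → R) = 0 ↔ C = 0 ∧ G = 0 := by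
  simp only [Matrix.cons_eq_zero_iff, Matrix.zero_empty, and_true, mul_eq_zero, hi, false_or]
  constructor
  · rintro ⟨h₁, h₂, h₃⟩
    have hC : C = 0 := by
      have : 2 * C = 0 := by linear_combination h₁ + h₂
      simpa [h2] using this
    exact ⟨hC, by linear_combination h₃ - a * hC⟩
  · rintro ⟨rfl, rfl⟩
    simp

theorem stmt_0_general (r : ℕ) (g₀ : ℂ) (g : Fin r → ℂ) (hg : ∀ j, g j ≠ g₀)
    (q : Fin r → ℂ) :
    ((∑ j, q j = 0) ∧ (∑ j, q j / (g j - g₀) = 0)) ↔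
      (∑ j, (q j / (g j - g₀)) •
          (![1 - g₀ * g j, Complex.I * (1 + g₀ * g j), g₀ + g j] : Fin 3 → ℂ)) = 0 := by
  have hq : ∑ j, q j = ∑ j, q j / (g j - g₀) * g j - g₀ * ∑ j, q j / (g j - g₀) := by
    rw [mul_sum, ← sum_sub_distrib]
    refine sum_congr rfl fun j _ => ?_
    linear_combination (div_mul_cancel₀ (q j) (sub_ne_zero.mpr (hg j))).symm
  rw [sum_smul_vecCons_eq, vecCons_eq_zero_iff two_ne_zero Complex.I_ne_zero, hq]
  constructor
  · rintro ⟨hG, hC⟩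
    exact ⟨hC, by simpa [hC] using hG⟩
  · rintro ⟨hC, hG⟩
    simp [hC, hG]

/-- The two defining equations of a discrete holomorphic quadratic differential at a vertex
(`∑ⱼ qⱼ = 0` and `∑ⱼ qⱼ/(gⱼ − g₀) = 0`) hold iff the associated ℂ³-valued discrete 1-form is
closed at that vertex. -/
theorem stmt_0 (r : ℕ) (hr : 1 ≤ r) (g₀ : ℂ) (g : Fin r → ℂ) (hg : ∀ j, g j ≠ g₀)
    (q : Fin r → ℂ) :
    ((∑ j, q j = 0) ∧ (∑ j, q j / (g j - g₀) = 0)) ↔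
      (∑ j, (q j / (g j - g₀)) •
          (![1 - g₀ * g j, Complex.I * (1 + g₀ * g j), g₀ + g j] : Fin 3 → ℂ)) = 0 :=
  stmt_0_general r g₀ g hg q
end

section
/- Let gᵢ ≠ gⱼ be complex numbers, let W := (gⱼ − gᵢ)⁻¹ • (1 − gᵢgⱼ, √(−1)(1 + gᵢgⱼ), gᵢ + gⱼ) ∈ ℂ³, and let v ∈ ℝ³ be the componentwise imaginary part of W. Then ‖v‖² · (1 − ⟨n(gᵢ), n(gⱼ)⟩) + ⟨n(gᵢ) × n(gⱼ), v⟩ = 0, where n(z) := (1 + |z|²)⁻¹ • (2 Re z, 2 Im z, |z|² − 1) ∈ ℝ³ is the inverse stereographic projection of z ∈ ℂ and × denotes the cross product in ℝ³. -/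
/-!
Multiplying numerator and denominator of `W` by `conj (gⱼ - gᵢ)` gives
`v = ‖gᵢ - gⱼ‖⁻² • v₀` with `v₀` polynomial in `gᵢ, gⱼ`, and writing `n(z) = (1 + ‖z‖²)⁻¹ • L z`
with `L z` polynomial as well, three polynomial identities remain:
`‖v₀‖² = ‖gᵢ - gⱼ‖² ‖1 + gᵢ conj gⱼ‖²`, `⟪L gᵢ × L gⱼ, v₀⟫ = -2 ‖gᵢ - gⱼ‖² ‖1 + gᵢ conj gⱼ‖²`
and the chordal distance formula `1 - ⟪n gᵢ, n gⱼ⟫ = 2 ‖gᵢ - gⱼ‖² / ((1 + ‖gᵢ‖²)(1 + ‖gⱼ‖²))`.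
Both terms of the identity are then `± 2 ‖1 + gᵢ conj gⱼ‖² / ((1 + ‖gᵢ‖²)(1 + ‖gⱼ‖²))`.
-/

open scoped RealInnerProductSpace

/-- The vector `(x, y, z)` in Euclidean 3-space. -/
noncomputable def e3 (x y z : ℝ) : EuclideanSpace ℝ (Fin 3) :=
  (WithLp.equiv 2 _).symm ![x, y, z]

/-- The cross product in Euclidean 3-space. -/
noncomputable def cross3 (a b : EuclideanSpace ℝ (Fin 3)) : EuclideanSpace ℝ (Fin 3) :=
  e3 (a 1 * b 2 - a 2 * b 1) (a 2 * b 0 - a 0 * b 2) (a 0 * b 1 - a 1 * b 0)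

/-- Inverse stereographic projection `n(z) = (1 + |z|²)⁻¹ (2 Re z, 2 Im z, |z|² - 1)`. -/
noncomputable def invStereo (z : ℂ) : EuclideanSpace ℝ (Fin 3) :=
  (1 + ‖z‖ ^ 2)⁻¹ • e3 (2 * z.re) (2 * z.im) (‖z‖ ^ 2 - 1)

/-- The Weierstrass edge vector `W = (gⱼ - gᵢ)⁻¹ • (1 - gᵢgⱼ, √(-1)(1 + gᵢgⱼ), gᵢ + gⱼ) ∈ ℂ³`. -/
noncomputable def wVec (gi gj : ℂ) : Fin 3 → ℂ :=
  (gj - gi)⁻¹ • ![1 - gi * gj, Complex.I * (1 + gi * gj), gi + gj]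

/-- Componentwise imaginary part of a vector in ℂ³, as a vector in ℝ³. -/
noncomputable def imVec (W : Fin 3 → ℂ) : EuclideanSpace ℝ (Fin 3) :=
  e3 (W 0).im (W 1).im (W 2).im

/-- Componentwise real part of a vector in ℂ³, as a vector in ℝ³. -/
noncomputable def reVec (W : Fin 3 → ℂ) : EuclideanSpace ℝ (Fin 3) :=
  e3 (W 0).re (W 1).re (W 2).re

open ComplexConjugate

lemma inner_e3 (x y z u v w : ℝ) : ⟪e3 x y z, e3 u v w⟫ = x * u + y * v + z * w := by
  simp only [e3, WithLp.equiv_symm_apply, PiLp.inner_apply, RCLike.inner_apply,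
    Real.ringHom_apply, Fin.sum_univ_three, Matrix.cons_val_zero, Matrix.cons_val_one,
    Matrix.cons_val]
  ring

lemma cross3_e3 (x y z u v w : ℝ) :
    cross3 (e3 x y z) (e3 u v w) = e3 (y * w - z * v) (z * u - x * w) (x * v - y * u) :=
  rfl

lemma cross3_smul_smul (r s : ℝ) (x y : EuclideanSpace ℝ (Fin 3)) :
    cross3 (r • x) (s • y) = (r * s) • cross3 x y := by
  ext i
  fin_cases i <;> simp [cross3, e3] <;> ring

noncomputable def stereoLift (z : ℂ) : EuclideanSpace ℝ (Fin 3) :=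
  e3 (2 * z.re) (2 * z.im) (‖z‖ ^ 2 - 1)

lemma invStereo_eq_smul_stereoLift (z : ℂ) :
    invStereo z = (1 + ‖z‖ ^ 2)⁻¹ • stereoLift z :=
  rfl

lemma inner_stereoLift (a b : ℂ) :
    ⟪stereoLift a, stereoLift b⟫ = (1 + ‖a‖ ^ 2) * (1 + ‖b‖ ^ 2) - 2 * ‖a - b‖ ^ 2 := by
  simp only [stereoLift, inner_e3, Complex.sq_norm, Complex.normSq_apply, Complex.sub_re,
    Complex.sub_im]
  ring

/-- The chordal distance formula `‖n a - n b‖² = 4‖a - b‖² / ((1 + ‖a‖²)(1 + ‖b‖²))`, halved. -/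
lemma one_sub_inner_invStereo (a b : ℂ) :
    1 - ⟪invStereo a, invStereo b⟫ = 2 * ‖a - b‖ ^ 2 / ((1 + ‖a‖ ^ 2) * (1 + ‖b‖ ^ 2)) := by
  have ha : (1 : ℝ) + ‖a‖ ^ 2 ≠ 0 := by positivity
  have hb : (1 : ℝ) + ‖b‖ ^ 2 ≠ 0 := by positivity
  rw [invStereo_eq_smul_stereoLift, invStereo_eq_smul_stereoLift, real_inner_smul_left,
    real_inner_smul_right, inner_stereoLift]
  field_simp
  ring

lemma imVec_real_smul (r : ℝ) (W : Fin 3 → ℂ) : imVec (r • W) = r • imVec W := by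
  ext i
  fin_cases i <;> simp [imVec, e3]

noncomputable def wNumerator (a b : ℂ) : Fin 3 → ℂ :=
  conj (b - a) • ![1 - a * b, Complex.I * (1 + a * b), a + b]

lemma wVec_eq_smul_wNumerator (a b : ℂ) :
    wVec a b = ((‖b - a‖ ^ 2)⁻¹ : ℝ) • wNumerator a b := by
  ext k
  simp only [wVec, wNumerator, Pi.smul_apply, smul_eq_mul, Complex.real_smul, Complex.inv_def,
    Complex.sq_norm]
  ring

lemma imVec_wVec (a b : ℂ) : imVec (wVec a b) = (‖b - a‖ ^ 2)⁻¹ • imVec (wNumerator a b) := by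
  rw [wVec_eq_smul_wNumerator, imVec_real_smul]

lemma imVec_wNumerator (a b : ℂ) : imVec (wNumerator a b) =
    e3 (((b - a).re * (-(a * b).im) - (b - a).im * (1 - (a * b).re)))
      ((b - a).re * (1 + (a * b).re) + (b - a).im * (a * b).im)
      ((b - a).re * (a + b).im - (b - a).im * (a + b).re) := by
  simp only [imVec, wNumerator, Pi.smul_apply, smul_eq_mul, Matrix.cons_val_zero,
    Matrix.cons_val_one, Matrix.cons_val, Complex.mul_im, Complex.mul_re, Complex.conj_re,
    Complex.conj_im, Complex.I_re, Complex.I_im, Complex.one_re, Complex.one_im, Complex.add_re,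
    Complex.add_im, Complex.sub_re, Complex.sub_im]
  congr 1 <;> ring

lemma norm_imVec_wNumerator_sq (a b : ℂ) :
    ‖imVec (wNumerator a b)‖ ^ 2 = ‖a - b‖ ^ 2 * ‖1 + a * conj b‖ ^ 2 := by
  rw [← real_inner_self_eq_norm_sq, imVec_wNumerator, inner_e3]
  simp only [Complex.sq_norm, Complex.normSq_apply, Complex.sub_re, Complex.sub_im,
    Complex.add_re, Complex.add_im, Complex.mul_re, Complex.mul_im, Complex.one_re,
    Complex.one_im, Complex.conj_re, Complex.conj_im]
  ring

lemma inner_cross3_stereoLift_imVec_wNumerator (a b : ℂ) :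
    ⟪cross3 (stereoLift a) (stereoLift b), imVec (wNumerator a b)⟫ =
      -2 * ‖a - b‖ ^ 2 * ‖1 + a * conj b‖ ^ 2 := by
  rw [imVec_wNumerator, stereoLift, stereoLift, cross3_e3, inner_e3]
  simp only [Complex.sq_norm, Complex.normSq_apply, Complex.sub_re, Complex.sub_im,
    Complex.add_re, Complex.add_im, Complex.mul_re, Complex.mul_im, Complex.one_re,
    Complex.one_im, Complex.conj_re, Complex.conj_im]
  ring

/-- For `v = Im W` the identity `‖v‖² (1 − ⟨n(gᵢ), n(gⱼ)⟩) + ⟨n(gᵢ) × n(gⱼ), v⟩ = 0` holds. -/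
theorem stmt_3 (gi gj : ℂ) (hne : gi ≠ gj) :
    ‖imVec (wVec gi gj)‖ ^ 2 * (1 - ⟪invStereo gi, invStereo gj⟫) +
      ⟪cross3 (invStereo gi) (invStereo gj), imVec (wVec gi gj)⟫ = 0 := by
  have hd : ‖gi - gj‖ ^ 2 ≠ 0 := by simpa [sub_eq_zero] using hne
  have hi : (1 : ℝ) + ‖gi‖ ^ 2 ≠ 0 := by positivity
  have hj : (1 : ℝ) + ‖gj‖ ^ 2 ≠ 0 := by positivity
  rw [one_sub_inner_invStereo, imVec_wVec, norm_smul, mul_pow, norm_imVec_wNumerator_sq,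
    invStereo_eq_smul_stereoLift, invStereo_eq_smul_stereoLift, cross3_smul_smul,
    real_inner_smul_left, real_inner_smul_right, inner_cross3_stereoLift_imVec_wNumerator,
    norm_sub_rev gj gi, Real.norm_of_nonneg (by positivity)]
  field_simp
  ring
end

section
/- Let r ≥ 1, let g₀ ∈ ℂ, let g : Fin r → ℂ satisfy gⱼ ≠ g₀ for all j, and let q : Fin r → ℝ satisfy ∑ⱼ qⱼ = 0 and ∑ⱼ qⱼ/(gⱼ − g₀) = 0. For each j set vⱼ := qⱼ • Im W(g₀, gⱼ) ∈ ℝ³, where W(g₀, gⱼ) := (gⱼ − g₀)⁻¹ • (1 − g₀gⱼ, √(−1)(1 + g₀gⱼ), g₀ + gⱼ) ∈ ℂ³ and Im denotes the componentwise imaginary part. Then ∑ⱼ vⱼ = 0, and ⟨vⱼ, n(g₀)⟩ = 0 for every j, where n(z) := (1 + |z|²)⁻¹ • (2 Re z, 2 Im z, |z|² − 1) ∈ ℝ³. -/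
open scoped RealInnerProductSpace

/-! Writing `gⱼ = g₀ + dⱼ`, the Weierstrass vector splits as
`W(g₀, gⱼ) = dⱼ⁻¹ • P(g₀) + R(g₀)` with `P = wVecPolar g₀`, `R = wVecRegular g₀`, so
`∑ qⱼ W(g₀, gⱼ) = (∑ qⱼ / dⱼ) • P + (∑ qⱼ) • R = 0`, and taking imaginary parts closes the polygon.
For the normal, the complex-bilinear pairings are `P · n(g₀) = 0` and `R · n(g₀) = -1`, so
`W(g₀, gⱼ) · n(g₀) = -1` is real and `⟨Im W, n(g₀)⟩ = Im (W · n(g₀)) = 0`. -/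

open ComplexConjugate

noncomputable def wVecPolar (a : ℂ) : Fin 3 → ℂ :=
  ![1 - a ^ 2, Complex.I * (1 + a ^ 2), 2 * a]

noncomputable def wVecRegular (a : ℂ) : Fin 3 → ℂ :=
  ![-a, Complex.I * a, 1]

theorem wVec_eq_smul_wVecPolar_add_wVecRegular {a b : ℂ} (h : b ≠ a) :
    wVec a b = (b - a)⁻¹ • wVecPolar a + wVecRegular a := by
  have hba : b - a ≠ 0 := sub_ne_zero.mpr h
  ext i
  fin_cases i <;>
    simp only [wVec, wVecPolar, wVecRegular, Fin.zero_eta, Fin.mk_one, Fin.reduceFinMk,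
      Pi.add_apply, Pi.smul_apply, smul_eq_mul, Matrix.cons_val_zero, Matrix.cons_val_one,
      Matrix.cons_val] <;>
    field_simp <;> ring

theorem sum_smul_wVec {ι : Type*} (s : Finset ι) (a : ℂ) (g : ι → ℂ) (hg : ∀ j ∈ s, g j ≠ a)
    (q : ι → ℂ) :
    ∑ j ∈ s, q j • wVec a (g j)
      = (∑ j ∈ s, q j / (g j - a)) • wVecPolar a + (∑ j ∈ s, q j) • wVecRegular a := by
  rw [Finset.sum_smul, Finset.sum_smul, ← Finset.sum_add_distrib]
  refine Finset.sum_congr rfl fun j hj => ?_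
  rw [wVec_eq_smul_wVecPolar_add_wVecRegular (hg j hj), smul_add, smul_smul, div_eq_mul_inv]

noncomputable def imVecₗ : (Fin 3 → ℂ) →ₗ[ℝ] EuclideanSpace ℝ (Fin 3) where
  toFun := imVec
  map_add' W W' := by ext i; fin_cases i <;> simp [imVec, e3]
  map_smul' c W := by ext i; fin_cases i <;> simp [imVec, e3]

theorem inner_imVec (W : Fin 3 → ℂ) (x : EuclideanSpace ℝ (Fin 3)) :
    ⟪imVec W, x⟫ = (∑ i, W i * x i).im := by
  simp [imVec, e3, PiLp.inner_apply, Fin.sum_univ_three, mul_comm]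

theorem sum_mul_invStereo (W : Fin 3 → ℂ) (a : ℂ) :
    ∑ i, W i * invStereo a i = (1 + a * conj a)⁻¹ *
      (W 0 * (a + conj a) + W 1 * ((a - conj a) / Complex.I) + W 2 * (a * conj a - 1)) := by
  have hre : ((2 * a.re : ℝ) : ℂ) = a + conj a := by push_cast; rw [Complex.re_eq_add_conj]; ring
  have him : ((2 * a.im : ℝ) : ℂ) = (a - conj a) / Complex.I := by
    push_cast; rw [Complex.im_eq_sub_conj]; field_simp
  have hnorm : ((‖a‖ ^ 2 : ℝ) : ℂ) = a * conj a := by rw [Complex.mul_conj, Complex.sq_norm]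
  simp only [invStereo, e3, Fin.sum_univ_three, PiLp.smul_apply, smul_eq_mul,
    WithLp.equiv_symm_apply, Matrix.cons_val_zero, Matrix.cons_val_one,
    Matrix.cons_val_two, Matrix.head_cons, Matrix.tail_cons, Complex.ofReal_mul,
    Complex.ofReal_inv, Complex.ofReal_add, Complex.ofReal_sub, Complex.ofReal_one]
  rw [← Complex.ofReal_mul, hre, ← Complex.ofReal_mul, him, hnorm]
  ring

theorem sum_wVecPolar_mul_invStereo (a : ℂ) : ∑ i, wVecPolar a i * invStereo a i = 0 := by
  rw [sum_mul_invStereo]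
  simp only [wVecPolar, Matrix.cons_val_zero, Matrix.cons_val_one, Matrix.cons_val_two,
    Matrix.head_cons, Matrix.tail_cons]
  field_simp
  ring

theorem sum_wVecRegular_mul_invStereo (a : ℂ) : ∑ i, wVecRegular a i * invStereo a i = -1 := by
  have hpos : 1 + a * conj a ≠ 0 := by
    have : (0 : ℝ) < 1 + Complex.normSq a := by
      linarith [Complex.normSq_nonneg a]
    rw [Complex.mul_conj]; exact_mod_cast this.ne'
  rw [sum_mul_invStereo]
  simp only [wVecRegular, Matrix.cons_val_zero, Matrix.cons_val_one, Matrix.cons_val_two,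
    Matrix.head_cons, Matrix.tail_cons]
  field_simp
  ring

theorem inner_imVec_wVec_invStereo {a b : ℂ} (h : b ≠ a) :
    ⟪imVec (wVec a b), invStereo a⟫ = 0 := by
  simp only [inner_imVec, wVec_eq_smul_wVecPolar_add_wVecRegular h, Pi.add_apply, Pi.smul_apply,
    smul_eq_mul, add_mul, mul_assoc, Finset.sum_add_distrib, ← Finset.mul_sum,
    sum_wVecPolar_mul_invStereo, sum_wVecRegular_mul_invStereo]
  simp

theorem stmt_4_general (r : ℕ) (g₀ : ℂ) (g : Fin r → ℂ) (hg : ∀ j, g j ≠ g₀)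
    (q : Fin r → ℝ)
    (hq1 : ∑ j, q j = 0) (hq2 : ∑ j, (q j : ℂ) / (g j - g₀) = 0)
    (v : Fin r → EuclideanSpace ℝ (Fin 3))
    (hv : ∀ j, v j = q j • imVec (wVec g₀ (g j))) :
    (∑ j, v j = 0) ∧ ∀ j, ⟪v j, invStereo g₀⟫ = 0 := by
  refine ⟨?_, fun j => ?_⟩
  · have hclose : ∑ j, (q j : ℂ) • wVec g₀ (g j) = 0 := by
      rw [sum_smul_wVec _ _ _ (fun j _ => hg j), hq2, ← Complex.ofReal_sum, hq1]
      simp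
    calc ∑ j, v j = imVecₗ (∑ j, (q j : ℂ) • wVec g₀ (g j)) := by
          simp only [hv, map_sum, Complex.coe_smul, map_smul]; rfl
      _ = 0 := by rw [hclose, map_zero]
  · rw [hv, inner_smul_left, inner_imVec_wVec_invStereo (hg j), mul_zero]

/-- Local content of the discrete Weierstrass representation: the edge vectors
`vⱼ := qⱼ • Im W(g₀, gⱼ)` of the dual face close up and lie in the plane orthogonal to
the unit normal `n(g₀)`. -/
theorem stmt_4 (r : ℕ) (hr : 1 ≤ r) (g₀ : ℂ) (g : Fin r → ℂ) (hg : ∀ j, g j ≠ g₀)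
    (q : Fin r → ℝ)
    (hq1 : ∑ j, q j = 0) (hq2 : ∑ j, (q j : ℂ) / (g j - g₀) = 0)
    (v : Fin r → EuclideanSpace ℝ (Fin 3))
    (hv : ∀ j, v j = q j • imVec (wVec g₀ (g j))) :
    (∑ j, v j = 0) ∧ ∀ j, ⟪v j, invStereo g₀⟫ = 0 :=
  stmt_4_general r g₀ g hg q hq1 hq2 v hv
end

section
/- Let r ≥ 3, let g₀ ∈ ℂ, and let g : ZMod r → ℂ satisfy gⱼ ≠ g₀ for all j and g_{j+1} ≠ gⱼ for all j. For j ∈ ZMod r define Xⱼ := −((g_{j−1} − g₀)(g_{j+1} − gⱼ)) / ((g₀ − g_{j+1})(gⱼ − g_{j−1})). Then ∑_{m=1}^{r} ∏_{j=1}^{m} Xⱼ = 0, where the indices 1, …, r are taken in ZMod r. -/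
private lemma cr_base (z a b c : ℂ) (hba : b - a ≠ 0) (hbz : b - z ≠ 0) (hcz : c - z ≠ 0)
    (hzc : z - c ≠ 0) :
    -((a - z) * (c - b)) / ((z - c) * (b - a)) =
      (a - z) * (b - z) / (b - a) / (b - z) - (a - z) * (b - z) / (b - a) / (c - z) := by
  field_simp
  ring

private lemma cr_step (z a b c K : ℂ) (haz : a - z ≠ 0) (hbz : b - z ≠ 0) (hcz : c - z ≠ 0)
    (hzc : z - c ≠ 0) (hba : b - a ≠ 0) :
    (K / (a - z) - K / (b - z)) * (-((a - z) * (c - b)) / ((z - c) * (b - a))) =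
      K / (b - z) - K / (c - z) := by
  field_simp
  ring

private lemma cr_tele (F : ℕ → ℂ) :
    ∀ n : ℕ, ∑ m ∈ Finset.Icc 1 n, (F m - F (m + 1)) = F 1 - F (n + 1) := by
  intro n
  induction n with
  | zero => simp
  | succ n ih => rw [Finset.sum_Icc_succ_top (by omega), ih]; ring

/-- The additive relation `X₁ + X₁X₂ + ⋯ + X₁X₂⋯X_r = 0` satisfied by the complex cross ratios
of the edges around an interior vertex of a triangulated surface realized in ℂ. -/
theorem stmt_7 (r : ℕ) [NeZero r] (hr : 3 ≤ r) (g₀ : ℂ) (g : ZMod r → ℂ)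
    (hg : ∀ j, g j ≠ g₀) (hgg : ∀ j, g (j + 1) ≠ g j)
    (X : ZMod r → ℂ)
    (hX : ∀ j, X j = -((g (j - 1) - g₀) * (g (j + 1) - g j)) /
        ((g₀ - g (j + 1)) * (g j - g (j - 1)))) :
    ∑ m ∈ Finset.Icc 1 r, ∏ j ∈ Finset.Icc 1 m, X (j : ZMod r) = 0 := by
  have hg' : ∀ j : ZMod r, g j - g₀ ≠ 0 := fun j => sub_ne_zero.mpr (hg j)
  have hg'' : ∀ j : ZMod r, g₀ - g j ≠ 0 := fun j => sub_ne_zero.mpr (Ne.symm (hg j))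
  have hgg' : ∀ j : ZMod r, g (j + 1) - g j ≠ 0 := fun j => sub_ne_zero.mpr (hgg j)
  set C : ℂ := (g 0 - g₀) * (g 1 - g₀) / (g 1 - g 0) with hC
  set f : ℕ → ℂ := fun m => C / (g (m : ZMod r) - g₀) with hf
  have key : ∀ m : ℕ, 1 ≤ m → ∏ j ∈ Finset.Icc 1 m, X (j : ZMod r) = f m - f (m + 1) := by
    intro m hm
    induction m, hm using Nat.le_induction with
    | base =>
      simp only [Finset.Icc_self, Finset.prod_singleton, hf, hX, hC]
      have h0 : ((1 : ℕ) : ZMod r) - 1 = 0 := by push_cast; ring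
      have h2 : ((1 : ℕ) : ZMod r) + 1 = ((1 + 1 : ℕ) : ZMod r) := by push_cast; ring
      have h1 : ((1 : ℕ) : ZMod r) = (1 : ZMod r) := by push_cast; ring
      rw [h0, h2, h1]
      have e1 := hgg' 0
      rw [zero_add] at e1
      exact cr_base g₀ (g 0) (g 1) (g ((1 + 1 : ℕ) : ZMod r)) e1 (hg' _) (hg' _) (hg'' _)
    | succ m hm ih =>
      rw [Finset.prod_Icc_succ_top (by omega), ih]
      have c1 : ((m + 1 : ℕ) : ZMod r) = (m : ZMod r) + 1 := by push_cast; ring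
      have c2 : ((m + 1 + 1 : ℕ) : ZMod r) = (m : ZMod r) + 1 + 1 := by push_cast; ring
      have c3 : ((m : ZMod r) + 1) - 1 = (m : ZMod r) := by ring
      rw [hX, hf]
      simp only [c1, c2, c3]
      exact cr_step g₀ (g (m : ZMod r)) (g ((m : ZMod r) + 1)) (g ((m : ZMod r) + 1 + 1)) C
        (hg' _) (hg' _) (hg' _) (hg'' _) (hgg' _)
  rw [Finset.sum_congr rfl fun m hm => key m (Finset.mem_Icc.mp hm).1, cr_tele f r]
  have hcast : ((r + 1 : ℕ) : ZMod r) = ((1 : ℕ) : ZMod r) := by push_cast; simp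
  rw [hf]
  simp only [hcast]
  ring
end

section
/- Let r ≥ 1 and let X : Fin r → ℝ → ℂ be such that each Xⱼ is differentiable at 0 with Xⱼ(0) ≠ 0, and assume that for all t ∈ ℝ one has ∏_{j=1}^{r} Xⱼ(t) = 1 and ∑_{m=1}^{r} ∏_{j=1}^{m} Xⱼ(t) = 0. Define qⱼ := Xⱼ′(0)/Xⱼ(0). Then ∑_{j=1}^{r} qⱼ = 0 and ∑_{m=1}^{r} (∑_{j=1}^{m} qⱼ) · ∏_{j=1}^{m} Xⱼ(0) = 0. -/
/-! Along the family, `t ↦ ∏ⱼ Xⱼ(t)` and `t ↦ ∑ₘ ∏_{j ≤ m} Xⱼ(t)` are constant, so their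
derivatives at `0` vanish. Since no `Xⱼ(0)` vanishes, the derivative of a partial product
`∏_{j ∈ s} Xⱼ` at `0` is its logarithmic derivative `∑_{j ∈ s} qⱼ` times its value, which turns
these two vanishing derivatives into the two linearized relations. -/

section LogDeriv

variable {𝕜 𝕜' ι : Type*} [NontriviallyNormedField 𝕜] [NontriviallyNormedField 𝕜']
  [NormedAlgebra 𝕜 𝕜']

theorem deriv_finset_prod_eq_sum_logDeriv_mul {s : Finset ι} {f : ι → 𝕜 → 𝕜'} {x : 𝕜}
    (hf : ∀ i ∈ s, f i x ≠ 0) (hd : ∀ i ∈ s, DifferentiableAt 𝕜 (f i) x) :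
    deriv (∏ i ∈ s, f i ·) x = (∑ i ∈ s, logDeriv (f i) x) * ∏ i ∈ s, f i x := by
  rw [← logDeriv_prod hf hd, logDeriv_apply,
    div_mul_cancel₀ _ (Finset.prod_ne_zero_iff.mpr hf)]

end LogDeriv

theorem stmt_8_general (r : ℕ) (X : Fin r → ℝ → ℂ)
    (hdiff : ∀ j, DifferentiableAt ℝ (X j) 0) (hX0 : ∀ j, X j 0 ≠ 0)
    (hprod : ∀ t : ℝ, ∏ j, X j t = 1)
    (hsum : ∀ t : ℝ, ∑ m ∈ Finset.range r,
        ∏ j ∈ Finset.univ.filter (fun j : Fin r => (j : ℕ) ≤ m), X j t = 0)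
    (q : Fin r → ℂ) (hq : ∀ j, q j = deriv (X j) 0 / X j 0) :
    (∑ j, q j = 0) ∧
      ∑ m ∈ Finset.range r,
          (∑ j ∈ Finset.univ.filter (fun j : Fin r => (j : ℕ) ≤ m), q j) *
            ∏ j ∈ Finset.univ.filter (fun j : Fin r => (j : ℕ) ≤ m), X j 0 = 0 := by
  have hq' : q = fun j => logDeriv (X j) 0 := funext hq
  have hderiv (s : Finset (Fin r)) :
      deriv (∏ j ∈ s, X j ·) 0 = (∑ j ∈ s, q j) * ∏ j ∈ s, X j 0 := by
    rw [hq']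
    exact deriv_finset_prod_eq_sum_logDeriv_mul (fun j _ => hX0 j) (fun j _ => hdiff j)
  constructor
  · have hconst : deriv (∏ j, X j ·) 0 = 0 := by simp only [hprod, deriv_const]
    rwa [hderiv, hprod, mul_one] at hconst
  · have hconst : deriv (fun t => ∑ m ∈ Finset.range r,
        ∏ j ∈ Finset.univ.filter (fun j : Fin r => (j : ℕ) ≤ m), X j t) 0 = 0 := by
      simp only [hsum, deriv_const]
    rw [deriv_fun_sum fun m _ => DifferentiableAt.fun_finsetProd fun j _ => hdiff j] at hconst
    simpa only [hderiv] using hconst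

/-- Tangent space to the variety of cross ratios: the logarithmic derivative
`qⱼ = Xⱼ′(0)/Xⱼ(0)` of a family satisfying the product and sum relations satisfies the
linearized relations. -/
theorem stmt_8 (r : ℕ) (hr : 1 ≤ r) (X : Fin r → ℝ → ℂ)
    (hdiff : ∀ j, DifferentiableAt ℝ (X j) 0) (hX0 : ∀ j, X j 0 ≠ 0)
    (hprod : ∀ t : ℝ, ∏ j, X j t = 1)
    (hsum : ∀ t : ℝ, ∑ m ∈ Finset.range r,
        ∏ j ∈ Finset.univ.filter (fun j : Fin r => (j : ℕ) ≤ m), X j t = 0)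
    (q : Fin r → ℂ) (hq : ∀ j, q j = deriv (X j) 0 / X j 0) :
    (∑ j, q j = 0) ∧
      ∑ m ∈ Finset.range r,
          (∑ j ∈ Finset.univ.filter (fun j : Fin r => (j : ℕ) ≤ m), q j) *
            ∏ j ∈ Finset.univ.filter (fun j : Fin r => (j : ℕ) ≤ m), X j 0 = 0 :=
  stmt_8_general r X hdiff hX0 hprod hsum q hq
end

section
/- Let r ≥ 3, let g₀ ∈ ℂ, and let g : ZMod r → ℂ satisfy gⱼ ≠ g₀ for all j and g_{j+1} ≠ gⱼ for all j. For j ∈ ZMod r define Xⱼ := −((g_{j−1} − g₀)(g_{j+1} − gⱼ)) / ((g₀ − g_{j+1})(gⱼ − g_{j−1})). Let q : ZMod r → ℝ satisfy ∑_{j=1}^{r} qⱼ = 0 and ∑_{m=1}^{r} (∑_{j=1}^{m} qⱼ) · ∏_{j=1}^{m} Xⱼ = 0. Then ∑_{j=1}^{r} qⱼ/(gⱼ − g₀) = 0. -/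
/-!
Write `aⱼ = gⱼ - g₀` and `bⱼ = 1/aⱼ - 1/aⱼ₊₁`. The cross ratio is the quotient `Xⱼ = bⱼ / bⱼ₋₁`,
so `∏_{j ≤ m} Xⱼ = bₘ / b₀` telescopes and the second relation says `∑ₘ Qₘ bₘ = 0`, where
`Qₘ = ∑_{j ≤ m} qⱼ`. Summation by parts turns `∑ⱼ qⱼ / aⱼ` into `Qᵣ / aᵣ₊₁ + ∑ₘ Qₘ bₘ`, and both
terms vanish.
-/

open Finset

theorem Finset.sum_Icc_mul_eq_sum_mul_add_sum_mul_sub {R : Type*} [CommRing R] (q c : ℕ → R)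
    (m : ℕ) :
    ∑ j ∈ Icc 1 m, q j * c j =
      (∑ j ∈ Icc 1 m, q j) * c (m + 1) +
        ∑ k ∈ Icc 1 m, (∑ j ∈ Icc 1 k, q j) * (c k - c (k + 1)) := by
  induction m with
  | zero => simp
  | succ m ih =>
    simp only [sum_Icc_succ_top (Nat.le_add_left 1 m), ih]
    ring

theorem Finset.prod_Icc_div_sub_one {K : Type*} [Field K] (f : ℕ → K) (hf : ∀ k, f k ≠ 0)
    (m : ℕ) : ∏ j ∈ Icc 1 m, f j / f (j - 1) = f m / f 0 := by
  induction m with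
  | zero => simp [hf 0]
  | succ m ih =>
    rw [prod_Icc_succ_top (Nat.le_add_left 1 m), ih, Nat.add_sub_cancel, mul_comm,
      div_mul_div_cancel₀ (hf m)]

theorem neg_mul_div_mul_eq_inv_sub_inv_div {K : Type*} [Field K] {g₀ gp g gn : K}
    (hp : gp ≠ g₀) (h : g ≠ g₀) (hn : gn ≠ g₀) (hgp : g ≠ gp) :
    -((gp - g₀) * (gn - g)) / ((g₀ - gn) * (g - gp)) =
      ((g - g₀)⁻¹ - (gn - g₀)⁻¹) / ((gp - g₀)⁻¹ - (g - g₀)⁻¹) := by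
  have hp' : gp - g₀ ≠ 0 := sub_ne_zero.mpr hp
  have h' : g - g₀ ≠ 0 := sub_ne_zero.mpr h
  have hn' : g₀ - gn ≠ 0 := sub_ne_zero.mpr hn.symm
  have hgp' : g - gp ≠ 0 := sub_ne_zero.mpr hgp
  rw [inv_sub_inv h' (sub_ne_zero.mpr hn), inv_sub_inv hp' h', sub_sub_sub_cancel_right,
    sub_sub_sub_cancel_right]
  field_simp
  ring

theorem stmt_9_general (r : ℕ) (g₀ : ℂ) (g : ZMod r → ℂ)
    (hg : ∀ j, g j ≠ g₀) (hgg : ∀ j, g (j + 1) ≠ g j)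
    (X : ZMod r → ℂ)
    (hX : ∀ j, X j = -((g (j - 1) - g₀) * (g (j + 1) - g j)) /
        ((g₀ - g (j + 1)) * (g j - g (j - 1))))
    (q : ZMod r → ℝ)
    (hq1 : ∑ j ∈ Finset.Icc 1 r, q (j : ZMod r) = 0)
    (hq2 : ∑ m ∈ Finset.Icc 1 r,
        ((∑ j ∈ Finset.Icc 1 m, q (j : ZMod r) : ℝ) : ℂ) *
          ∏ j ∈ Finset.Icc 1 m, X (j : ZMod r) = 0) :
    ∑ j ∈ Finset.Icc 1 r, (q (j : ZMod r) : ℂ) / (g (j : ZMod r) - g₀) = 0 := by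
  set b : ℕ → ℂ := fun k => (g k - g₀)⁻¹ - (g (k + 1 : ℕ) - g₀)⁻¹ with hb
  have hb0 : ∀ k, b k ≠ 0 := fun k h => by
    rw [sub_eq_zero, inv_inj, sub_left_inj, Nat.cast_succ] at h
    exact hgg _ h.symm
  have hXb : ∀ j ∈ Icc 1 r, X j = b j / b (j - 1) := by
    intro j hj
    obtain ⟨k, rfl⟩ := Nat.exists_eq_add_of_le' (mem_Icc.mp hj).1
    simp only [hX, hb, Nat.add_sub_cancel, Nat.cast_succ, add_sub_cancel_right]
    exact neg_mul_div_mul_eq_inv_sub_inv_div (hg _) (hg _) (hg _) (hgg _)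
  have hprod : ∀ m ∈ Icc 1 r, ∏ j ∈ Icc 1 m, X j = b m / b 0 := fun m hm => by
    rw [prod_congr rfl fun j hj => hXb j (Icc_subset_Icc_right (mem_Icc.mp hm).2 hj),
      prod_Icc_div_sub_one b hb0]
  have hQb : ∑ m ∈ Icc 1 r, (∑ j ∈ Icc 1 m, (q j : ℂ)) * b m = 0 := by
    rw [← div_left_inj' (hb0 0), zero_div, sum_div, ← hq2]
    refine sum_congr rfl fun m hm => ?_
    rw [hprod m hm, Complex.ofReal_sum, mul_div_assoc]
  calc ∑ j ∈ Icc 1 r, (q j : ℂ) / (g j - g₀)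
      = ∑ j ∈ Icc 1 r, (q j : ℂ) * (g j - g₀)⁻¹ := by simp only [div_eq_mul_inv]
    _ = (∑ j ∈ Icc 1 r, (q j : ℂ)) * (g (r + 1 : ℕ) - g₀)⁻¹ +
          ∑ m ∈ Icc 1 r, (∑ j ∈ Icc 1 m, (q j : ℂ)) * b m :=
        sum_Icc_mul_eq_sum_mul_add_sum_mul_sub _ (fun k => (g k - g₀)⁻¹) r
    _ = 0 := by rw [hQb, ← Complex.ofReal_sum, hq1]; simp

/-- A real-valued function `q` on the edges at a vertex satisfying the linearized cross-ratio
relations is a discrete holomorphic quadratic differential: `∑ⱼ qⱼ/(gⱼ − g₀) = 0`. -/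
theorem stmt_9 (r : ℕ) [NeZero r] (hr : 3 ≤ r) (g₀ : ℂ) (g : ZMod r → ℂ)
    (hg : ∀ j, g j ≠ g₀) (hgg : ∀ j, g (j + 1) ≠ g j)
    (X : ZMod r → ℂ)
    (hX : ∀ j, X j = -((g (j - 1) - g₀) * (g (j + 1) - g j)) /
        ((g₀ - g (j + 1)) * (g j - g (j - 1))))
    (q : ZMod r → ℝ)
    (hq1 : ∑ j ∈ Finset.Icc 1 r, q (j : ZMod r) = 0)
    (hq2 : ∑ m ∈ Finset.Icc 1 r,
        ((∑ j ∈ Finset.Icc 1 m, q (j : ZMod r) : ℝ) : ℂ) *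
          ∏ j ∈ Finset.Icc 1 m, X (j : ZMod r) = 0) :
    ∑ j ∈ Finset.Icc 1 r, (q (j : ZMod r) : ℂ) / (g (j : ZMod r) - g₀) = 0 :=
  stmt_9_general r g₀ g hg hgg X hX q hq1 hq2
end

section
/- Let m ≥ 3 and let f, ḟ : ZMod m → ℝ³. Let n ∈ ℝ³ with ‖n‖ = 1, let h, ḣ ∈ ℝ, and suppose ⟨fᵢ, n⟩ = h and ⟨ḟᵢ, n⟩ = ḣ for all i. For each i ∈ ZMod m let Nᵢ ∈ ℝ³ with ‖Nᵢ‖ = 1 and let ḣᵢ ∈ ℝ, and suppose: f_{i+1} ≠ fᵢ; ⟨f_{i+1} − fᵢ, Nᵢ⟩ = 0; ⟨ḟᵢ, Nᵢ⟩ = ḣᵢ and ⟨ḟ_{i+1}, Nᵢ⟩ = ḣᵢ. Set ℓᵢ := ‖f_{i+1} − fᵢ‖ and sᵢ := ⟨n × Nᵢ, (f_{i+1} − fᵢ)/ℓᵢ⟩, and assume sᵢ ≠ 0 for all i. Then ½ ∑_{i ∈ ZMod m} (⟨ḟᵢ × f_{i+1}, n⟩ + ⟨fᵢ × ḟ_{i+1},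 n⟩) = 2ḣH + ∑_{i ∈ ZMod m} (ℓᵢ/sᵢ)(ḣᵢ − ḣ), where H := ½ ∑_{i ∈ ZMod m} ℓᵢ (1 − ⟨n, Nᵢ⟩)/sᵢ. -/
open scoped RealInnerProductSpace

/-!
Write `eᵢ = fᵢ₊₁ - fᵢ`. Since `eᵢ` is orthogonal to both `n` and `Nᵢ`, it is parallel to
`n × Nᵢ`, and the definition of `sᵢ` fixes the factor: `eᵢ = (ℓᵢ / sᵢ) (n × Nᵢ)`. Hence
`⟨v × eᵢ, n⟩ = (ℓᵢ / sᵢ) ⟨v, Nᵢ - ⟨n, Nᵢ⟩ n⟩` for every `v`, which for `v = ḟᵢ` and `v = ḟᵢ₊₁`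
equals `(ℓᵢ / sᵢ)(ḣᵢ - ⟨n, Nᵢ⟩ ḣ)`. Splitting `fᵢ₊₁ = fᵢ + eᵢ`, the `i`-th summand of the
derivative of the area is the sum of these two edge terms plus the difference
`⟨fᵢ₊₁ × ḟᵢ₊₁, n⟩ - ⟨fᵢ × ḟᵢ, n⟩`, which telescopes around the face.
-/

section Cross3

variable (a b c : EuclideanSpace ℝ (Fin 3))

lemma inner_eq_sum_three : ⟪a, b⟫ = a 0 * b 0 + a 1 * b 1 + a 2 * b 2 := by
  simp [PiLp.inner_apply, Fin.sum_univ_three, mul_comm]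

@[simp] lemma cross3_apply_zero : cross3 a b 0 = a 1 * b 2 - a 2 * b 1 := rfl
@[simp] lemma cross3_apply_one : cross3 a b 1 = a 2 * b 0 - a 0 * b 2 := rfl
@[simp] lemma cross3_apply_two : cross3 a b 2 = a 0 * b 1 - a 1 * b 0 := rfl

lemma EuclideanSpace.ext_three {a b : EuclideanSpace ℝ (Fin 3)} (h₀ : a 0 = b 0)
    (h₁ : a 1 = b 1) (h₂ : a 2 = b 2) : a = b := by
  ext i
  fin_cases i <;> assumption

lemma inner_cross3_eq_inner_cross3 : ⟪cross3 a b, c⟫ = ⟪a, cross3 b c⟫ := by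
  simp only [inner_eq_sum_three, cross3_apply_zero, cross3_apply_one, cross3_apply_two]
  ring

lemma cross3_cross3_left : cross3 (cross3 a b) c = ⟪a, c⟫ • b - ⟪b, c⟫ • a := by
  refine EuclideanSpace.ext_three ?_ ?_ ?_ <;>
    simp only [PiLp.sub_apply, PiLp.smul_apply, smul_eq_mul, inner_eq_sum_three,
      cross3_apply_zero, cross3_apply_one, cross3_apply_two] <;>
    ring

lemma cross3_cross3_right : cross3 a (cross3 b c) = ⟪a, c⟫ • b - ⟪a, b⟫ • c := by
  refine EuclideanSpace.ext_three ?_ ?_ ?_ <;>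
    simp only [PiLp.sub_apply, PiLp.smul_apply, smul_eq_mul, inner_eq_sum_three,
      cross3_apply_zero, cross3_apply_one, cross3_apply_two] <;>
    ring

@[simp] lemma cross3_zero_right : cross3 a 0 = 0 := by
  refine EuclideanSpace.ext_three ?_ ?_ ?_ <;> simp

lemma cross3_smul_left (r : ℝ) : cross3 (r • a) b = r • cross3 a b := by
  refine EuclideanSpace.ext_three ?_ ?_ ?_ <;>
    simp only [PiLp.smul_apply, smul_eq_mul, cross3_apply_zero, cross3_apply_one,
      cross3_apply_two] <;>
    ring

end Cross3

lemma inner_cross3_add_inner_cross3 (f f' g g' n : EuclideanSpace ℝ (Fin 3)) :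
    ⟪cross3 g f', n⟫ + ⟪cross3 f g', n⟫ =
      ⟪cross3 g (f' - f), n⟫ + ⟪cross3 g' (f' - f), n⟫ +
        (⟪cross3 f' g', n⟫ - ⟪cross3 f g, n⟫) := by
  simp only [inner_eq_sum_three, PiLp.sub_apply, cross3_apply_zero, cross3_apply_one,
    cross3_apply_two]
  ring

lemma Fintype.sum_sub_add_right_eq_zero {G M : Type*} [AddGroup G] [Fintype G]
    [AddCommGroup M] (g : G → M) (a : G) : ∑ i, (g (i + a) - g i) = 0 := by
  rw [Finset.sum_sub_distrib, sub_eq_zero]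
  exact Equiv.sum_comp (Equiv.addRight a) g

section Edge

variable {e n N : EuclideanSpace ℝ (Fin 3)}

lemma inner_self_smul_cross3_eq (hen : ⟪e, n⟫ = 0) (heN : ⟪e, N⟫ = 0) :
    ⟪e, e⟫ • cross3 n N = ⟪e, cross3 n N⟫ • e := by
  have hcross : cross3 (cross3 n N) e = 0 := by
    rw [cross3_cross3_left, real_inner_comm, hen, real_inner_comm, heN, zero_smul, zero_smul,
      sub_zero]
  rw [← sub_eq_zero, ← cross3_cross3_right, hcross, cross3_zero_right]

lemma eq_smul_cross3_of_inner_eq_zero {ℓ s : ℝ} (hen : ⟪e, n⟫ = 0) (heN : ⟪e, N⟫ = 0)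
    (hℓ : ℓ = ‖e‖) (hs : s = ⟪cross3 n N, ℓ⁻¹ • e⟫) (hs0 : s ≠ 0) :
    e = (ℓ / s) • cross3 n N := by
  have hℓ0 : ℓ ≠ 0 := by
    -- `ℓ = 0` would give `ℓ⁻¹ = 0`, hence `s = 0`
    rintro rfl
    simp [hs] at hs0
  have hee : ⟪e, e⟫ = ℓ ^ 2 := by rw [real_inner_self_eq_norm_sq, hℓ]
  have heu : ⟪e, cross3 n N⟫ = s * ℓ := by
    rw [hs, real_inner_smul_right, real_inner_comm]
    field_simp
  have hpar := inner_self_smul_cross3_eq hen heN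
  rw [hee, heu] at hpar
  calc e = (s * ℓ)⁻¹ • ((s * ℓ) • e) := by rw [inv_smul_smul₀ (mul_ne_zero hs0 hℓ0)]
    _ = (ℓ / s) • cross3 n N := by
      rw [← hpar, smul_smul]
      congr 1
      field_simp

lemma inner_cross3_eq_of_eq_smul_cross3 {r : ℝ} (hn : ‖n‖ = 1) (he : e = r • cross3 n N)
    (v : EuclideanSpace ℝ (Fin 3)) :
    ⟪cross3 v e, n⟫ = r * (⟪v, N⟫ - ⟪n, N⟫ * ⟪v, n⟫) := by
  rw [inner_cross3_eq_inner_cross3, he, cross3_smul_left, cross3_cross3_left,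
    real_inner_self_eq_norm_sq, hn, real_inner_comm N n, one_pow, one_smul,
    real_inner_smul_right, inner_sub_right, real_inner_smul_right]

end Edge

theorem stmt_10_general (m : ℕ) [NeZero m]
    (f fdot : ZMod m → EuclideanSpace ℝ (Fin 3))
    (n : EuclideanSpace ℝ (Fin 3)) (hn : ‖n‖ = 1)
    (h hdot : ℝ)
    (hf : ∀ i, ⟪f i, n⟫ = h) (hfdot : ∀ i, ⟪fdot i, n⟫ = hdot)
    (N : ZMod m → EuclideanSpace ℝ (Fin 3))
    (hdoti : ZMod m → ℝ)
    (horth : ∀ i, ⟪f (i + 1) - f i, N i⟫ = 0)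
    (hh1 : ∀ i, ⟪fdot i, N i⟫ = hdoti i) (hh2 : ∀ i, ⟪fdot (i + 1), N i⟫ = hdoti i)
    (ℓ : ZMod m → ℝ) (hℓ : ∀ i, ℓ i = ‖f (i + 1) - f i‖)
    (s : ZMod m → ℝ) (hs : ∀ i, s i = ⟪cross3 n (N i), (ℓ i)⁻¹ • (f (i + 1) - f i)⟫)
    (hs0 : ∀ i, s i ≠ 0)
    (H : ℝ) (hH : H = (1 / 2) * ∑ i, ℓ i * (1 - ⟪n, N i⟫) / s i) :
    (1 / 2) * ∑ i, (⟪cross3 (fdot i) (f (i + 1)), n⟫ + ⟪cross3 (f i) (fdot (i + 1)), n⟫) =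
      2 * hdot * H + ∑ i, (ℓ i / s i) * (hdoti i - hdot) := by
  have hedge (i : ZMod m) : f (i + 1) - f i = (ℓ i / s i) • cross3 n (N i) :=
    eq_smul_cross3_of_inner_eq_zero (by rw [inner_sub_left, hf, hf, sub_self]) (horth i) (hℓ i)
      (hs i) (hs0 i)
  have hsummand (i : ZMod m) :
      ⟪cross3 (fdot i) (f (i + 1)), n⟫ + ⟪cross3 (f i) (fdot (i + 1)), n⟫ =
        2 * (ℓ i / s i * (hdoti i - ⟪n, N i⟫ * hdot)) +
          (⟪cross3 (f (i + 1)) (fdot (i + 1)), n⟫ - ⟪cross3 (f i) (fdot i), n⟫) := by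
    rw [inner_cross3_add_inner_cross3, inner_cross3_eq_of_eq_smul_cross3 hn (hedge i),
      inner_cross3_eq_of_eq_smul_cross3 hn (hedge i), hh1, hh2, hfdot, hfdot, two_mul]
  rw [Finset.sum_congr rfl fun i _ => hsummand i, Finset.sum_add_distrib,
    Fintype.sum_sub_add_right_eq_zero (fun i => ⟪cross3 (f i) (fdot i), n⟫), add_zero, hH]
  simp only [Finset.mul_sum]
  rw [← Finset.sum_add_distrib]
  refine Finset.sum_congr rfl fun i _ => ?_
  ring

/-- First variation of the signed area of a planar face of a trivalent polyhedral surface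
under a face-normal-preserving deformation:
`½ d(Area) = 2ḣH + ∑ᵢ (ℓᵢ/sᵢ)(ḣᵢ − ḣ)` where `H = ½ ∑ᵢ ℓᵢ(1 − ⟨n, Nᵢ⟩)/sᵢ`. -/
theorem stmt_10 (m : ℕ) [NeZero m] (hm : 3 ≤ m)
    (f fdot : ZMod m → EuclideanSpace ℝ (Fin 3))
    (n : EuclideanSpace ℝ (Fin 3)) (hn : ‖n‖ = 1)
    (h hdot : ℝ)
    (hf : ∀ i, ⟪f i, n⟫ = h) (hfdot : ∀ i, ⟪fdot i, n⟫ = hdot)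
    (N : ZMod m → EuclideanSpace ℝ (Fin 3)) (hN : ∀ i, ‖N i‖ = 1)
    (hdoti : ZMod m → ℝ)
    (hne : ∀ i, f (i + 1) ≠ f i)
    (horth : ∀ i, ⟪f (i + 1) - f i, N i⟫ = 0)
    (hh1 : ∀ i, ⟪fdot i, N i⟫ = hdoti i) (hh2 : ∀ i, ⟪fdot (i + 1), N i⟫ = hdoti i)
    (ℓ : ZMod m → ℝ) (hℓ : ∀ i, ℓ i = ‖f (i + 1) - f i‖)
    (s : ZMod m → ℝ) (hs : ∀ i, s i = ⟪cross3 n (N i), (ℓ i)⁻¹ • (f (i + 1) - f i)⟫)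
    (hs0 : ∀ i, s i ≠ 0)
    (H : ℝ) (hH : H = (1 / 2) * ∑ i, ℓ i * (1 - ⟪n, N i⟫) / s i) :
    (1 / 2) * ∑ i, (⟪cross3 (fdot i) (f (i + 1)), n⟫ + ⟪cross3 (f i) (fdot (i + 1)), n⟫) =
      2 * hdot * H + ∑ i, (ℓ i / s i) * (hdoti i - hdot) :=
  stmt_10_general m f fdot n hn h hdot hf hfdot N hdoti horth hh1 hh2 ℓ hℓ s hs hs0 H hH
end

section
/- Let A, B, C, D be quaternions with zero real part such that B − A, C − B, D − C, and D − A are all nonzero, let α, β be nonzero real numbers, and suppose the quaternionic cross ratio satisfies (A − B)(B − C)⁻¹(C − D)(D − A)⁻¹ = α/β (a real scalar quaternion). Then α·(B − A)/‖B − A‖² + β·(C − B)/‖C − B‖² = β·(D − A)/‖D − A‖² + α·(C − D)/‖C − D‖². -/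
/-!
Put `a = B - A`, `b = C - B`, `e = C - D`, `d = D - A` and `r = α / β`, so `a + b = d + e`.
For an imaginary quaternion `x⁻¹ = -x / ‖x‖²`, so the claim is `β • (r a⁻¹ + b⁻¹) = β • (d⁻¹ + r e⁻¹)`.
The cross ratio gives `a b⁻¹ e = r d`; conjugating it (all four edges satisfy `x̄ = -x`) gives the
reversed cross ratio `d⁻¹ e b⁻¹ a = r`, i.e. `a d⁻¹ e = r b`. Multiplying the claim by `a` on the
left and `e` on the right turns both sides into `r (a + b) = r (d + e)`.
-/

open Quaternion

section DivisionRing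

variable {𝕜 R : Type*} [Field 𝕜] [DivisionRing R] [Algebra 𝕜 R]

theorem smul_inv_add_inv_eq_inv_add_smul_inv {a b d e : R} {r : 𝕜} (ha : a ≠ 0) (he : e ≠ 0)
    (hsum : a + b = d + e) (hd : a * b⁻¹ * e = r • d) (hb : a * d⁻¹ * e = r • b) :
    r • a⁻¹ + b⁻¹ = d⁻¹ + r • e⁻¹ := by
  apply mul_left_cancel₀ ha
  apply mul_right_cancel₀ he
  calc a * (r • a⁻¹ + b⁻¹) * e = r • e + a * b⁻¹ * e := by
        rw [mul_add, add_mul, mul_smul_comm, smul_mul_assoc, mul_inv_cancel₀ ha, one_mul]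
    _ = r • (d + e) := by rw [hd, smul_add, add_comm]
    _ = r • (a + b) := by rw [hsum]
    _ = a * d⁻¹ * e + r • a := by rw [hb, smul_add, add_comm]
    _ = a * (d⁻¹ + r • e⁻¹) * e := by
        rw [mul_add, add_mul, mul_smul_comm, smul_mul_assoc, mul_assoc a e⁻¹,
          inv_mul_cancel₀ he, mul_one]

end DivisionRing

namespace Quaternion

theorem div_sq_norm_smul_eq_neg_smul_inv {x : ℍ[ℝ]} (hx : x.re = 0) (γ : ℝ) :
    (γ / ‖x‖ ^ 2) • x = -(γ • x⁻¹) := by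
  have hinv : x⁻¹ = (normSq x)⁻¹ • star x := rfl
  rw [hinv, star_eq_neg.2 hx, smul_neg, smul_neg, neg_neg, smul_smul, sq,
    ← normSq_eq_norm_mul_self, div_eq_mul_inv]

theorem inv_mul_mul_inv_mul_eq_coe_of_mul_inv_mul_mul_inv_eq_coe {a b e d : ℍ[ℝ]}
    (ha : a.re = 0) (hb : b.re = 0) (he : e.re = 0) (hd : d.re = 0) {r : ℝ}
    (h : a * b⁻¹ * e * d⁻¹ = r) : d⁻¹ * e * b⁻¹ * a = r := by
  have := congrArg star h
  simp only [star_mul, star_inv₀, star_eq_neg.2 ha, star_eq_neg.2 hb, star_eq_neg.2 he,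
    star_eq_neg.2 hd, inv_neg, star_coe, mul_neg, neg_mul, neg_neg] at this
  simpa only [mul_assoc] using this

end Quaternion

theorem stmt_13_general (A B C D : Quaternion ℝ)
    (hA : A.re = 0) (hB : B.re = 0) (hC : C.re = 0) (hD : D.re = 0)
    (h1 : B - A ≠ 0) (h2 : C - B ≠ 0) (h3 : D - C ≠ 0) (h4 : D - A ≠ 0)
    (α β : ℝ) (hβ : β ≠ 0)
    (hQ : (A - B) * (B - C)⁻¹ * (C - D) * (D - A)⁻¹ = ((α / β : ℝ) : Quaternion ℝ)) :
    (α / ‖B - A‖ ^ 2) • (B - A) + (β / ‖C - B‖ ^ 2) • (C - B) =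
      (β / ‖D - A‖ ^ 2) • (D - A) + (α / ‖C - D‖ ^ 2) • (C - D) := by
  have hre : ∀ {X Y : ℍ[ℝ]}, X.re = 0 → Y.re = 0 → (X - Y).re = 0 := fun hX hY => by
    rw [re_sub, hX, hY, sub_zero]
  have h3' : C - D ≠ 0 := by rw [← neg_sub]; exact neg_ne_zero.2 h3
  have hQ' : (B - A) * (C - B)⁻¹ * (C - D) * (D - A)⁻¹ = ((α / β : ℝ) : ℍ[ℝ]) := by
    rwa [← neg_sub B A, ← neg_sub C B, inv_neg, neg_mul_neg] at hQ
  have hrev := inv_mul_mul_inv_mul_eq_coe_of_mul_inv_mul_mul_inv_eq_coe (hre hB hA) (hre hC hB)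
    (hre hC hD) (hre hD hA) hQ'
  have hd : (B - A) * (C - B)⁻¹ * (C - D) = (α / β) • (D - A) := by
    rw [← coe_mul_eq_smul, ← hQ', inv_mul_cancel_right₀ h4]
  have hb : (B - A) * (D - A)⁻¹ * (C - D) = (α / β) • (C - B) := by
    calc (B - A) * (D - A)⁻¹ * (C - D)
        = (B - A) * ((D - A)⁻¹ * (C - D) * (C - B)⁻¹ * (B - A)) * (B - A)⁻¹ * (C - B) := by
          simp only [mul_assoc, mul_inv_cancel_left₀ h1, inv_mul_cancel₀ h2, mul_one]
      _ = (α / β) • (C - B) := by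
          rw [hrev, ← (coe_commute _ _).eq, mul_inv_cancel_right₀ h1, coe_mul_eq_smul]
  have key := smul_inv_add_inv_eq_inv_add_smul_inv h1 h3' (by abel) hd hb
  have hαβ : β * (α / β) = α := mul_div_cancel₀ α hβ
  rw [div_sq_norm_smul_eq_neg_smul_inv (hre hB hA), div_sq_norm_smul_eq_neg_smul_inv (hre hC hB),
    div_sq_norm_smul_eq_neg_smul_inv (hre hD hA), div_sq_norm_smul_eq_neg_smul_inv (hre hC hD),
    ← hαβ, ← smul_smul, ← smul_smul, ← neg_add, ← neg_add, ← smul_add, ← smul_add, key]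

/-- Closedness of the Christoffel dual edges of a quadrilateral of purely imaginary quaternions
with real cross ratio `α/β`:
`α(B−A)/‖B−A‖² + β(C−B)/‖C−B‖² = β(D−A)/‖D−A‖² + α(C−D)/‖C−D‖²`. -/
theorem stmt_13 (A B C D : Quaternion ℝ)
    (hA : A.re = 0) (hB : B.re = 0) (hC : C.re = 0) (hD : D.re = 0)
    (h1 : B - A ≠ 0) (h2 : C - B ≠ 0) (h3 : D - C ≠ 0) (h4 : D - A ≠ 0)
    (α β : ℝ) (hα : α ≠ 0) (hβ : β ≠ 0)
    (hQ : (A - B) * (B - C)⁻¹ * (C - D) * (D - A)⁻¹ = ((α / β : ℝ) : Quaternion ℝ)) :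
    (α / ‖B - A‖ ^ 2) • (B - A) + (β / ‖C - B‖ ^ 2) • (C - B) =
      (β / ‖D - A‖ ^ 2) • (D - A) + (α / ‖C - D‖ ^ 2) • (C - D) :=
  stmt_13_general A B C D hA hB hC hD h1 h2 h3 h4 α β hβ hQ
end

section
/- Let A, B, C, D be four pairwise distinct quaternions with zero real part, regarded as points of ℝ³. Then the quaternionic cross ratio Q := (A − B)(B − C)⁻¹(C − D)(D − A)⁻¹ has zero imaginary part (i.e., is a real scalar) if and only if the four points lie on a common line or on a common circle, i.e., either A, B, C, D are collinear, or there exists a two-dimensional affine subspace of ℝ³ containing all four points together with a point c in it and a radius ρ > 0 such that each of A, B, C, D has distance ρ from c. -/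
/-!
Inverting about `A` turns the cross ratio into a ratio of two differences: writing
`x' = (x - A)⁻¹`, one has `Q = (B' - C')⁻¹ (D' - C')`, which is real exactly when `B'`, `C'`, `D'`
are collinear. For a quaternion `x⁻¹ = x̄ / |x|²` is the conjugate of the image of `x` under the
inversion in the unit sphere, so `Q` is real iff the inversion about `A` maps `B`, `C`, `D` to
collinear points. That inversion maps every line through `A` to itself and every circle through
`A` onto a line; conversely, a line missing `A` is the image of the circle through `A` whose centre
inverts to the reflection of `A` in that line.
-/

open EuclideanGeometry AffineSubspace Module

theorem collinear_coe_affineSpan_iff {k V P : Type*} [DivisionRing k] [AddCommGroup V]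
    [Module k V] [AddTorsor V P] {s : Set P} :
    Collinear k (affineSpan k s : Set P) ↔ Collinear k s := by
  rw [Collinear, Collinear, ← direction_eq_vectorSpan, direction_affineSpan]

namespace EuclideanGeometry

variable {V P : Type*} [NormedAddCommGroup V] [InnerProductSpace ℝ V] [MetricSpace P]
  [NormedAddTorsor V P]

theorem collinear_inter_perpBisector {S : AffineSubspace ℝ P} (hS : finrank ℝ S.direction = 2)
    {p q : P} (hp : p ∈ S) (hq : q ∈ S) (hpq : p ≠ q) :
    Collinear ℝ ((S : Set P) ∩ perpBisector p q) := by
  have : FiniteDimensional ℝ S.direction := Module.finite_of_finrank_eq_succ hS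
  set W := S.direction ⊓ (ℝ ∙ (q -ᵥ p))ᗮ
  have hlt : W < S.direction := by
    refine inf_lt_left.mpr fun hle => ?_
    have := Submodule.mem_orthogonal_singleton_iff_inner_right.mp (hle (vsub_mem_direction hq hp))
    exact hpq (vsub_eq_zero_iff_eq.mp (inner_self_eq_zero.mp this)).symm
  have hW : finrank ℝ W ≤ 1 := by
    have := Submodule.finrank_lt_finrank_of_lt hlt
    omega
  have hle : vectorSpan ℝ ((S : Set P) ∩ perpBisector p q) ≤ W :=
    le_inf (vectorSpan_mono ℝ Set.inter_subset_left)
      (direction_perpBisector p q ▸ vectorSpan_mono ℝ Set.inter_subset_right)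
  rw [collinear_iff_rank_le_one]
  calc Module.rank ℝ (vectorSpan ℝ ((S : Set P) ∩ perpBisector p q))
      ≤ Module.rank ℝ W := Submodule.rank_mono hle
    _ = finrank ℝ W := (finrank_eq_rank _ _).symm
    _ ≤ 1 := by exact_mod_cast hW

def OnCommonCircle (a b c d : P) : Prop :=
  ∃ (S : AffineSubspace ℝ P) (m : P) (ρ : ℝ),
    finrank ℝ S.direction = 2 ∧ a ∈ S ∧ b ∈ S ∧ c ∈ S ∧ d ∈ S ∧ m ∈ S ∧ 0 < ρ ∧
      dist a m = ρ ∧ dist b m = ρ ∧ dist c m = ρ ∧ dist d m = ρ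

variable {a b c d : P} {R : ℝ}

theorem inversion_mem_affineSpan_pair_of_collinear (hbc : inversion a R b ≠ inversion a R c)
    (h : Collinear ℝ {a, b, c, d}) :
    inversion a R d ∈ line[ℝ, inversion a R b, inversion a R c] := by
  have hL : ∀ x ∈ ({a, b, c, d} : Set P), inversion a R x ∈ affineSpan ℝ {a, b, c, d} :=
    fun x hx => mapsTo_inversion_affineSubspace_of_mem (subset_affineSpan ℝ _ (by simp))
      (subset_affineSpan ℝ _ hx)
  exact (collinear_coe_affineSpan_iff.mpr h).mem_affineSpan_of_mem_of_ne
    (hL b (by simp)) (hL c (by simp)) (hL d (by simp)) hbc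

theorem inversion_mem_affineSpan_pair_of_onCommonCircle (hR : R ≠ 0) (hb : b ≠ a) (hc : c ≠ a)
    (hd : d ≠ a) (hbc : b ≠ c) (h : OnCommonCircle a b c d) :
    inversion a R d ∈ line[ℝ, inversion a R b, inversion a R c] := by
  obtain ⟨S, m, ρ, hS, haS, hbS, hcS, hdS, hmS, hρ, ham, hbm, hcm, hdm⟩ := h
  have hma : m ≠ a := (dist_pos.mp (ham ▸ hρ)).symm
  have hmem : ∀ x ∈ S, x ≠ a → dist x m = ρ →
      inversion a R x ∈ (S : Set P) ∩ perpBisector a (inversion a R m) := fun x hxS hx hxm =>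
    ⟨mapsTo_inversion_affineSubspace_of_mem haS hxS,
      (inversion_mem_perpBisector_inversion_iff hR hx hma).mpr (by rw [hxm, dist_comm, ham])⟩
  exact (collinear_inter_perpBisector hS haS (mapsTo_inversion_affineSubspace_of_mem haS hmS)
    ((center_eq_inversion hR).not.mpr hma)).mem_affineSpan_of_mem_of_ne
    (hmem b hbS hb hbm) (hmem c hcS hc hcm) (hmem d hdS hd hdm) ((inversion_injective a hR).ne hbc)

theorem collinear_or_onCommonCircle_of_inversion_mem_affineSpan_pair (hR : R ≠ 0) (hb : b ≠ a)
    (hc : c ≠ a) (hd : d ≠ a) (hbc : b ≠ c)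
    (h : inversion a R d ∈ line[ℝ, inversion a R b, inversion a R c]) :
    Collinear ℝ {a, b, c, d} ∨ OnCommonCircle a b c d := by
  set L := line[ℝ, inversion a R b, inversion a R c]
  have hbL : inversion a R b ∈ L := left_mem_affineSpan_pair ..
  have hcL : inversion a R c ∈ L := right_mem_affineSpan_pair ..
  by_cases haL : a ∈ L
  · left
    have hL : ∀ x, inversion a R x ∈ L → x ∈ L := fun x hx => by
      simpa [inversion_inversion a hR] using
        mapsTo_inversion_affineSubspace_of_mem (R := R) haL hx
    have hLcol : Collinear ℝ (L : Set P) := collinear_coe_affineSpan_iff.mpr (collinear_pair ..)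
    refine hLcol.subset ?_
    simp only [Set.insert_subset_iff, Set.singleton_subset_iff]
    exact ⟨haL, hL b hbL, hL c hcL, hL d h⟩
  · right
    have : Nonempty L := ⟨⟨_, hbL⟩⟩
    set q := reflection L a
    have hqa : q ≠ a := (reflection_eq_self_iff a).not.mpr haL
    set m := inversion a R q
    have hma : m ≠ a := (inversion_eq_center hR).not.mpr hqa
    -- `L` lies in the perpendicular bisector of `a` and `q`, the image of the circle about `m`.
    have hdist : ∀ x, x ≠ a → inversion a R x ∈ L → dist x m = dist a m := fun x hx hxL => by
      rw [dist_comm a, ← inversion_mem_perpBisector_inversion_iff hR hx hma,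
        inversion_inversion a hR, mem_perpBisector_iff_dist_eq, dist_reflection_eq_of_mem L hxL]
    set S := affineSpan ℝ {a, inversion a R b, inversion a R c}
    have haS : a ∈ S := mem_affineSpan ℝ (by simp)
    have hLS : L ≤ S := affineSpan_mono ℝ (Set.subset_insert _ _)
    have hS : finrank ℝ S.direction = 2 := by
      have hind : AffineIndependent ℝ ![a, inversion a R b, inversion a R c] :=
        affineIndependent_iff_not_collinear_set.mpr fun hcol =>
          haL (hcol.mem_affineSpan_of_mem_of_ne (by simp) (by simp) (by simp)
            ((inversion_injective a hR).ne hbc))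
      have hrange : Set.range ![a, inversion a R b, inversion a R c] =
          {a, inversion a R b, inversion a R c} := by
        simp only [Matrix.range_cons, Matrix.range_empty, Set.union_empty, Set.singleton_union]
      rw [direction_affineSpan, ← hrange, hind.finrank_vectorSpan (Fintype.card_fin _)]
    have hS' : ∀ x, inversion a R x ∈ S → x ∈ S := fun x hx => by
      simpa [inversion_inversion a hR] using
        mapsTo_inversion_affineSubspace_of_mem (R := R) haS hx
    exact ⟨S, m, dist a m, hS, haS, hS' b (hLS hbL), hS' c (hLS hcL), hS' d (hLS h),
      mapsTo_inversion_affineSubspace_of_mem haS (reflection_mem_of_le_of_mem hLS haS),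
      dist_pos.mpr hma.symm, rfl, hdist b hb hbL, hdist c hc hcL, hdist d hd h⟩

theorem inversion_mem_affineSpan_pair_iff (hR : R ≠ 0) (hb : b ≠ a) (hc : c ≠ a) (hd : d ≠ a)
    (hbc : b ≠ c) :
    inversion a R d ∈ line[ℝ, inversion a R b, inversion a R c] ↔
      Collinear ℝ {a, b, c, d} ∨ OnCommonCircle a b c d :=
  ⟨collinear_or_onCommonCircle_of_inversion_mem_affineSpan_pair hR hb hc hd hbc, fun h =>
    h.elim (inversion_mem_affineSpan_pair_of_collinear ((inversion_injective a hR).ne hbc))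
      (inversion_mem_affineSpan_pair_of_onCommonCircle hR hb hc hd hbc)⟩

end EuclideanGeometry

def crossRatio {K : Type*} [DivisionRing K] (a b c d : K) : K :=
  (a - b) * (b - c)⁻¹ * (c - d) * (d - a)⁻¹

theorem crossRatio_eq_inv_sub_inv_mul {K : Type*} [DivisionRing K] {a b c d : K}
    (hb : b ≠ a) (hc : c ≠ a) (hd : d ≠ a) :
    crossRatio a b c d = ((b - a)⁻¹ - (c - a)⁻¹)⁻¹ * ((d - a)⁻¹ - (c - a)⁻¹) := by
  have hy : c - a ≠ 0 := sub_ne_zero.mpr hc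
  rw [crossRatio, ← neg_sub (c - a)⁻¹, inv_sub_inv' hy (sub_ne_zero.mpr hb),
    ← neg_sub (c - a)⁻¹, inv_sub_inv' hy (sub_ne_zero.mpr hd)]
  simp only [sub_sub_sub_cancel_right, inv_neg, mul_inv_rev, inv_inv, mul_assoc,
    mul_inv_cancel_left₀ hy, ← neg_sub b a, ← neg_sub d c, neg_mul, mul_neg, neg_neg]

namespace Quaternion

theorem inv_sub_eq_star_inversion_vsub (a x : ℍ[ℝ]) :
    (x - a)⁻¹ = star (inversion a 1 x -ᵥ a) := by
  rw [inversion_vsub_center, star_smul, inv_def, normSq_eq_norm_mul_self, dist_eq_norm,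
    vsub_eq_sub]
  congr 1
  field_simp

theorem inv_mul_im_eq_zero_iff {u v : ℍ[ℝ]} (hu : u ≠ 0) :
    ((u⁻¹ * v).imI = 0 ∧ (u⁻¹ * v).imJ = 0 ∧ (u⁻¹ * v).imK = 0) ↔ ∃ r : ℝ, r • u = v := by
  constructor
  · rintro ⟨hI, hJ, hK⟩
    refine ⟨(u⁻¹ * v).re, ?_⟩
    rw [← mul_coe_eq_smul, eq_comm, ← inv_mul_eq_iff_eq_mul₀ hu]
    ext <;> simp [hI, hJ, hK]
  · rintro ⟨r, rfl⟩
    rw [← mul_coe_eq_smul, inv_mul_cancel_left₀ hu]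
    simp

theorem crossRatio_im_eq_zero_iff {a b c d : ℍ[ℝ]} (hb : b ≠ a) (hc : c ≠ a) (hd : d ≠ a)
    (hbc : b ≠ c) :
    ((crossRatio a b c d).imI = 0 ∧ (crossRatio a b c d).imJ = 0 ∧
        (crossRatio a b c d).imK = 0) ↔
      inversion a 1 d ∈ line[ℝ, inversion a 1 b, inversion a 1 c] := by
  have hne : inversion a 1 b -ᵥ inversion a 1 c ≠ 0 :=
    vsub_ne_zero.mpr ((inversion_injective a one_ne_zero).ne hbc)
  rw [crossRatio_eq_inv_sub_inv_mul hb hc hd, inv_sub_eq_star_inversion_vsub a b,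
    inv_sub_eq_star_inversion_vsub a c, inv_sub_eq_star_inversion_vsub a d, ← star_sub,
    ← star_sub, vsub_sub_vsub_cancel_right, vsub_sub_vsub_cancel_right,
    inv_mul_im_eq_zero_iff (star_ne_zero.mpr hne), ← vsub_vadd (inversion a 1 d) (inversion a 1 c),
    vadd_right_mem_affineSpan_pair]
  simp only [← star_smul, star_inj, vsub_vadd]

end Quaternion

theorem stmt_14_general (A B C D : Quaternion ℝ)
    (hAB : A ≠ B) (hAC : A ≠ C) (hAD : A ≠ D) (hBC : B ≠ C) :
    (((A - B) * (B - C)⁻¹ * (C - D) * (D - A)⁻¹).imI = 0 ∧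
        ((A - B) * (B - C)⁻¹ * (C - D) * (D - A)⁻¹).imJ = 0 ∧
        ((A - B) * (B - C)⁻¹ * (C - D) * (D - A)⁻¹).imK = 0) ↔
      (Collinear ℝ ({A, B, C, D} : Set (Quaternion ℝ)) ∨
        ∃ (P : AffineSubspace ℝ (Quaternion ℝ)) (c : Quaternion ℝ) (ρ : ℝ),
          Module.finrank ℝ P.direction = 2 ∧
          A ∈ P ∧ B ∈ P ∧ C ∈ P ∧ D ∈ P ∧ c ∈ P ∧ 0 < ρ ∧
          dist A c = ρ ∧ dist B c = ρ ∧ dist C c = ρ ∧ dist D c = ρ) :=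
  (Quaternion.crossRatio_im_eq_zero_iff hAB.symm hAC.symm hAD.symm hBC).trans
    (inversion_mem_affineSpan_pair_iff one_ne_zero hAB.symm hAC.symm hAD.symm hBC)

/-- For four pairwise distinct purely imaginary quaternions, the quaternionic cross ratio
`Q = (A−B)(B−C)⁻¹(C−D)(D−A)⁻¹` is a real scalar (zero imaginary part) iff the four points are
collinear or lie on a common circle (contained in a 2-dimensional affine subspace, equidistant
from a center in it). -/
theorem stmt_14 (A B C D : Quaternion ℝ)
    (hA : A.re = 0) (hB : B.re = 0) (hC : C.re = 0) (hD : D.re = 0)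
    (hAB : A ≠ B) (hAC : A ≠ C) (hAD : A ≠ D) (hBC : B ≠ C) (hBD : B ≠ D) (hCD : C ≠ D) :
    (((A - B) * (B - C)⁻¹ * (C - D) * (D - A)⁻¹).imI = 0 ∧
        ((A - B) * (B - C)⁻¹ * (C - D) * (D - A)⁻¹).imJ = 0 ∧
        ((A - B) * (B - C)⁻¹ * (C - D) * (D - A)⁻¹).imK = 0) ↔
      (Collinear ℝ ({A, B, C, D} : Set (Quaternion ℝ)) ∨
        ∃ (P : AffineSubspace ℝ (Quaternion ℝ)) (c : Quaternion ℝ) (ρ : ℝ),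
          Module.finrank ℝ P.direction = 2 ∧
          A ∈ P ∧ B ∈ P ∧ C ∈ P ∧ D ∈ P ∧ c ∈ P ∧ 0 < ρ ∧
          dist A c = ρ ∧ dist B c = ρ ∧ dist C c = ρ ∧ dist D c = ρ) :=
  stmt_14_general A B C D hAB hAC hAD hBC
end

section
/- Let a, w ∈ ℂ and define u, v ∈ ℝ³ by u := (Re((1 − a²)w), Re(√(−1)(1 + a²)w), Re(2aw)) and v := (Im((1 − a²)w), Im(√(−1)(1 + a²)w), Im(2aw)). Then ⟨u, v⟩ = 0 and ‖u‖ = ‖v‖ = |w|(1 + |a|²). -/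
open scoped RealInnerProductSpace

/-!
Writing the Weierstrass vector `Φ = ((1 - a²)w, √(-1)(1 + a²)w, 2aw)` as `u + √(-1) v`, one has
`∑ Φₖ² = ‖u‖² - ‖v‖² + 2√(-1)⟪u, v⟫` and `∑ |Φₖ|² = ‖u‖² + ‖v‖²`. Since `Φ` is isotropic
(`∑ Φₖ² = 0`), `u ⊥ v` and `‖u‖ = ‖v‖`; and by the parallelogram law
`|1 - a²|² + |1 + a²|² = 2(1 + |a|⁴)`, so `‖u‖² + ‖v‖² = ∑ |Φₖ|² = 2|w|²(1 + |a|²)²`.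
-/

open Complex

section RealImaginaryParts

variable {ι : Type*} [Fintype ι]

theorem sum_ofReal_add_mul_I_sq (x y : EuclideanSpace ℝ ι) :
    ∑ k, ((x k : ℂ) + y k * I) ^ 2 = ((‖x‖ ^ 2 - ‖y‖ ^ 2 : ℝ) : ℂ) + ((2 * ⟪x, y⟫ : ℝ) : ℂ) * I := by
  simp only [EuclideanSpace.real_norm_sq_eq, PiLp.inner_apply, RCLike.inner_apply, conj_trivial]
  push_cast
  rw [Finset.mul_sum, Finset.sum_mul, ← Finset.sum_sub_distrib, ← Finset.sum_add_distrib]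
  refine Finset.sum_congr rfl fun k _ => ?_
  linear_combination (y k : ℂ) ^ 2 * I_sq

theorem sum_norm_ofReal_add_mul_I_sq (x y : EuclideanSpace ℝ ι) :
    ∑ k, ‖(x k : ℂ) + y k * I‖ ^ 2 = ‖x‖ ^ 2 + ‖y‖ ^ 2 := by
  simp only [EuclideanSpace.real_norm_sq_eq, ← Finset.sum_add_distrib, ← normSq_eq_norm_sq,
    normSq_add_mul_I]

theorem inner_eq_zero_and_norm_eq_of_sum_sq_eq_zero {x y : EuclideanSpace ℝ ι}
    (h : ∑ k, ((x k : ℂ) + y k * I) ^ 2 = 0) :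
    ⟪x, y⟫ = 0 ∧ ‖x‖ = ‖y‖ := by
  rw [sum_ofReal_add_mul_I_sq, ← mk_eq_add_mul_I, Complex.ext_iff] at h
  obtain ⟨hre, him⟩ := h
  simp only [zero_re, zero_im, sub_eq_zero, mul_eq_zero, two_ne_zero, false_or] at hre him
  exact ⟨him, (pow_left_inj₀ (norm_nonneg x) (norm_nonneg y) two_ne_zero).mp hre⟩

end RealImaginaryParts

theorem reVec_add_imVec_mul_I (W : Fin 3 → ℂ) (k : Fin 3) :
    (reVec W k : ℂ) + imVec W k * I = W k := by
  fin_cases k <;> simp only [reVec, imVec, e3, WithLp.equiv_symm_apply, PiLp.toLp_apply] <;>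
    exact re_add_im _

/-- The Weierstrass integrand `(1 - g², √(-1)(1 + g²), 2g)ω` at a point where `g = a`, `ω = w`. -/
noncomputable def weierstrassVec (a w : ℂ) : Fin 3 → ℂ :=
  ![(1 - a ^ 2) * w, I * (1 + a ^ 2) * w, 2 * a * w]

theorem sum_weierstrassVec_sq (a w : ℂ) : ∑ k, weierstrassVec a w k ^ 2 = 0 := by
  simp only [weierstrassVec, Fin.sum_univ_three, Matrix.cons_val_zero, Matrix.cons_val_one,
    Matrix.cons_val_two, Matrix.head_cons, Matrix.tail_cons]
  linear_combination (1 + a ^ 2) ^ 2 * w ^ 2 * I_sq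

theorem sum_norm_weierstrassVec_sq (a w : ℂ) :
    ∑ k, ‖weierstrassVec a w k‖ ^ 2 = 2 * (‖w‖ * (1 + ‖a‖ ^ 2)) ^ 2 := by
  have hpar := parallelogram_law_with_norm ℝ (1 : ℂ) (a ^ 2)
  simp only [weierstrassVec, Fin.sum_univ_three, Matrix.cons_val_zero, Matrix.cons_val_one,
    Matrix.cons_val_two, Matrix.head_cons, Matrix.tail_cons, norm_mul, norm_I, norm_pow, norm_one,
    Complex.norm_ofNat] at hpar ⊢
  linear_combination ‖w‖ ^ 2 * hpar

/-- Pointwise conformality in the classical Weierstrass representation: the real and imaginary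
parts of `((1 − a²)w, √(−1)(1 + a²)w, 2aw)` are orthogonal vectors in ℝ³ of equal length
`|w|(1 + |a|²)`. -/
theorem stmt_15 (a w : ℂ) (u v : EuclideanSpace ℝ (Fin 3))
    (hu : u = e3 (((1 - a ^ 2) * w).re) ((Complex.I * (1 + a ^ 2) * w).re) ((2 * a * w).re))
    (hv : v = e3 (((1 - a ^ 2) * w).im) ((Complex.I * (1 + a ^ 2) * w).im) ((2 * a * w).im)) :
    ⟪u, v⟫ = 0 ∧ ‖u‖ = ‖w‖ * (1 + ‖a‖ ^ 2) ∧
      ‖v‖ = ‖w‖ * (1 + ‖a‖ ^ 2) := by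
  have hΦ : ∀ k, (u k : ℂ) + v k * I = weierstrassVec a w k := by
    rw [show u = reVec (weierstrassVec a w) from hu, show v = imVec (weierstrassVec a w) from hv]
    exact reVec_add_imVec_mul_I _
  have hiso : ∑ k, ((u k : ℂ) + v k * I) ^ 2 = 0 := by
    simpa only [hΦ] using sum_weierstrassVec_sq a w
  obtain ⟨horth, hnorm⟩ := inner_eq_zero_and_norm_eq_of_sum_sq_eq_zero hiso
  have hsum := sum_norm_ofReal_add_mul_I_sq u v
  simp only [hΦ, sum_norm_weierstrassVec_sq, ← hnorm] at hsum
  have hu_norm : ‖u‖ = ‖w‖ * (1 + ‖a‖ ^ 2) :=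
    (pow_left_inj₀ (norm_nonneg u) (by positivity) two_ne_zero).mp (by linarith)
  exact ⟨horth, hu_norm, hnorm ▸ hu_norm⟩
end
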